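/- arXiv:2605.31525 — 7 statements merged into one kernel-verified Lean document; each statement's English description precedes it below -/
import Mathlib

section
/- For any pair of positive integers (m, n_r) with m < n_r, there exists an m × n_r matrix G with entries in the field with two elements whose rows are linearly independent (full row-rank), such that for every k ∈ {1, …, n_r}, the number of vectors x in the row space of G (the span over GF(2) of the rows of G) with Hamming weight exactly k is at most 2 · n_r · 2^{m − n_r} · C(n_r, k), where C(n_r, k) is the binomial coefficient. -/
/-!
Probabilistic method. For `c ≠ 0` the codeword `c ᵥ* G` of a uniformly random `m × n`
matrix `G` is uniformly distributed on `GF(2)^n`. Charge a codeword of weight `k ≥ 1` the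
penalty `1 / C(n, k)` and the zero codeword the penalty `n`; a uniform vector then costs
`2n / 2^n` on average, so the `2^m - 1` nonzero messages cost less than `2n · 2^(m-n) ≤ n`
on average over `G`. A matrix `G` beating the average has no nonzero `c` with `c ᵥ* G = 0`
(that alone would cost `n`), so it has full row rank, and its `A_k` codewords of weight `k`
cost `A_k / C(n, k) < 2n · 2^(m-n)`.
-/

open Finset Matrix

theorem AddMonoidHom.card_smul_sum_comp_of_surjective {A B M : Type*} [AddGroup A] [Fintype A]
    [AddMonoid B] [Fintype B] [DecidableEq B] [AddCommMonoid M] (f : A →+ B)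
    (hf : Function.Surjective f) (w : B → M) :
    Fintype.card B • ∑ a, w (f a) = Fintype.card A • ∑ b, w b := by
  set N := #{a | f a = 0}
  have hfiber (b : B) : #{a | f a = b} = N :=
    AddMonoidHom.card_fiber_eq_of_mem_range f (hf b) (hf 0)
  have hcard : Fintype.card A = Fintype.card B * N := by
    rw [← card_univ, card_eq_sum_card_fiberwise (t := univ) fun a _ => mem_univ (f a)]
    simp [hfiber]
  have hsum : ∑ a, w (f a) = N • ∑ b, w b := by
    rw [← sum_fiberwise univ f, smul_sum]
    refine sum_congr rfl fun b _ => ?_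
    rw [sum_congr rfl fun a ha => congrArg w (mem_filter.mp ha).2, sum_const, hfiber]
  rw [hsum, hcard, smul_smul]

theorem Matrix.vecMul_surjective_of_ne_zero {K m n : Type*} [Field K] [Fintype m] [DecidableEq m]
    {c : m → K} (hc : c ≠ 0) : Function.Surjective fun G : Matrix m n K => c ᵥ* G := by
  obtain ⟨i, hi⟩ := Function.ne_iff.mp hc
  intro x
  exact ⟨vecMulVec (Pi.single i (c i)⁻¹) x, by
    simp [vecMul_vecMulVec, dotProduct_single, mul_inv_cancel₀ hi]⟩

theorem Matrix.card_smul_sum_comp_vecMul {K m n M : Type*} [Field K] [Fintype K] [DecidableEq K]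
    [Fintype m] [DecidableEq m] [Fintype n] [DecidableEq n] [AddCommMonoid M]
    {c : m → K} (hc : c ≠ 0) (w : (n → K) → M) :
    Fintype.card (n → K) • ∑ G : Matrix m n K, w (c ᵥ* G) =
      Fintype.card (Matrix m n K) • ∑ x, w x :=
  (AddMonoidHom.mk' (c ᵥ* ·) fun A B => vecMul_add A B c).card_smul_sum_comp_of_surjective
    (vecMul_surjective_of_ne_zero hc) w

theorem card_filter_hammingNorm_eq (ι : Type*) [Fintype ι] [DecidableEq ι] (k : ℕ) :
    #{x : ι → ZMod 2 | hammingNorm x = k} = (Fintype.card ι).choose k := by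
  rw [← card_univ, ← card_powersetCard]
  refine card_nbij' (fun x => ({i | x i ≠ 0} : Finset ι)) (fun s i => if i ∈ s then 1 else 0)
    ?_ ?_ ?_ ?_
  · intro x hx
    simpa [mem_powersetCard, hammingNorm] using hx
  · intro s hs
    have : #{i | (if i ∈ s then (1 : ZMod 2) else 0) ≠ 0} = #s := by congr 1; ext; simp
    simp_all [mem_powersetCard, hammingNorm]
  · intro x _
    funext i
    have : ∀ a : ZMod 2, a ≠ 0 → a = 1 := by decide
    by_cases h : x i = 0 <;> simp [h, this]
  · intro s _
    ext i
    by_cases h : i ∈ s <;> simp [h]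

theorem sum_comp_hammingNorm {ι M : Type*} [Fintype ι] [DecidableEq ι] [AddCommMonoid M]
    (g : ℕ → M) :
    ∑ x : ι → ZMod 2, g (hammingNorm x) =
      ∑ k ∈ range (Fintype.card ι + 1), (Fintype.card ι).choose k • g k := by
  rw [← sum_fiberwise_of_maps_to (t := range (Fintype.card ι + 1))
    (g := fun x : ι → ZMod 2 => hammingNorm x)
    fun x _ => mem_range_succ_iff.mpr hammingNorm_le_card_fintype]
  refine sum_congr rfl fun k _ => ?_
  rw [sum_congr rfl fun x hx => congrArg g (mem_filter.mp hx).2, sum_const,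
    card_filter_hammingNorm_eq]

theorem Matrix.ncard_setOf_mem_span_and {R m n : Type*} [Semiring R] [Fintype R] [Fintype m]
    [DecidableEq m] {G : Matrix m n R} (hG : LinearIndependent R G.row)
    (P : (n → R) → Prop) [DecidablePred P] :
    {x | x ∈ Submodule.span R (Set.range G) ∧ P x}.ncard = #{c : m → R | P (c ᵥ* G)} := by
  have hspan (x : n → R) : x ∈ Submodule.span R (Set.range G) ↔ ∃ c, c ᵥ* G = x := by
    change x ∈ Submodule.span R (Set.range G.row) ↔ _
    rw [← range_vecMulLinear]; rfl
  have hset : {x | x ∈ Submodule.span R (Set.range G) ∧ P x} =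
      (· ᵥ* G) '' {c | P (c ᵥ* G)} := by
    ext x
    simp only [Set.mem_ofPred_eq, hspan, Set.mem_image]
    constructor
    · rintro ⟨⟨c, rfl⟩, hc⟩
      exact ⟨c, hc, rfl⟩
    · rintro ⟨c, hc, rfl⟩
      exact ⟨⟨c, rfl⟩, hc⟩
  rw [hset, Set.ncard_image_of_injective _ (vecMul_injective_iff.mpr hG),
    Set.ncard_eq_toFinset_card']
  simp

noncomputable def weightPenalty (n k : ℕ) : ℝ := if k = 0 then n else ((n.choose k : ℝ))⁻¹

theorem weightPenalty_nonneg (n k : ℕ) : 0 ≤ weightPenalty n k := by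
  unfold weightPenalty; split_ifs <;> positivity

theorem sum_weightPenalty_hammingNorm (ι : Type*) [Fintype ι] [DecidableEq ι] :
    ∑ x : ι → ZMod 2, weightPenalty (Fintype.card ι) (hammingNorm x) =
      2 * Fintype.card ι := by
  have hpos (k : ℕ) (hk : k ∈ range (Fintype.card ι)) :
      (Fintype.card ι).choose (k + 1) • weightPenalty (Fintype.card ι) (k + 1) = 1 := by
    have : ((Fintype.card ι).choose (k + 1) : ℝ) ≠ 0 :=
      Nat.cast_ne_zero.mpr (Nat.choose_pos (mem_range.mp hk)).ne'
    simp [weightPenalty, this]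
  rw [sum_comp_hammingNorm, sum_range_succ', sum_congr rfl hpos]
  simp [weightPenalty]
  ring

section RowSpacePenalty

variable {κ ι : Type*} [Fintype κ] [DecidableEq κ] [Fintype ι]

noncomputable def rowSpacePenalty (G : Matrix κ ι (ZMod 2)) : ℝ :=
  ∑ c ∈ univ.erase 0, weightPenalty (Fintype.card ι) (hammingNorm (c ᵥ* G))

theorem card_mul_sum_rowSpacePenalty [DecidableEq ι] :
    Fintype.card (ι → ZMod 2) * ∑ G : Matrix κ ι (ZMod 2), rowSpacePenalty G =
      (Fintype.card (κ → ZMod 2) - 1) * Fintype.card (Matrix κ ι (ZMod 2)) *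
        (2 * Fintype.card ι) := by
  have hterm (c : κ → ZMod 2) (hc : c ∈ univ.erase 0) :
      Fintype.card (ι → ZMod 2) *
          ∑ G : Matrix κ ι (ZMod 2), weightPenalty (Fintype.card ι) (hammingNorm (c ᵥ* G)) =
        Fintype.card (Matrix κ ι (ZMod 2)) * (2 * Fintype.card ι) := by
    have := card_smul_sum_comp_vecMul (ne_of_mem_erase hc)
      fun x : ι → ZMod 2 => weightPenalty (Fintype.card ι) (hammingNorm x)
    simpa only [nsmul_eq_mul, sum_weightPenalty_hammingNorm] using this
  simp only [rowSpacePenalty]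
  rw [sum_comm, mul_sum, sum_congr rfl hterm, sum_const, card_erase_of_mem (mem_univ 0), card_univ,
    nsmul_eq_mul, Nat.cast_sub Fintype.card_pos, Nat.cast_one, mul_assoc]

theorem exists_rowSpacePenalty_lt [DecidableEq ι] [Nonempty ι] :
    ∃ G : Matrix κ ι (ZMod 2),
      rowSpacePenalty G <
        2 * Fintype.card ι * (2 : ℝ) ^ ((Fintype.card κ : ℤ) - Fintype.card ι) := by
  have hsum := card_mul_sum_rowSpacePenalty (κ := κ) (ι := ι)
  rw [Fintype.card_fun, Fintype.card_fun, ZMod.card] at hsum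
  push_cast at hsum
  have hB : (2 : ℝ) ^ Fintype.card ι * (2 * Fintype.card ι *
      (2 : ℝ) ^ ((Fintype.card κ : ℤ) - Fintype.card ι)) =
        2 * Fintype.card ι * 2 ^ Fintype.card κ := by
    rw [zpow_sub₀ two_ne_zero, zpow_natCast, zpow_natCast]
    field_simp
  have hn : (0 : ℝ) < Fintype.card ι := by exact_mod_cast Fintype.card_pos
  have hN : (0 : ℝ) < Fintype.card (Matrix κ ι (ZMod 2)) := by exact_mod_cast Fintype.card_pos
  obtain ⟨G, -, hG⟩ := exists_lt_of_sum_lt (s := univ)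
    (f := rowSpacePenalty (κ := κ) (ι := ι))
    (g := fun _ => 2 * Fintype.card ι * (2 : ℝ) ^ ((Fintype.card κ : ℤ) - Fintype.card ι))
    <| by
    rw [sum_const, card_univ, nsmul_eq_mul]
    refine lt_of_mul_lt_mul_left ?_ (pow_nonneg zero_le_two (Fintype.card ι))
    rw [hsum, mul_left_comm (2 ^ Fintype.card ι : ℝ), hB]
    nlinarith [mul_pos hN hn]
  exact ⟨G, hG⟩

theorem linearIndependent_row_of_rowSpacePenalty_lt {G : Matrix κ ι (ZMod 2)}
    (hG : rowSpacePenalty G < Fintype.card ι) : LinearIndependent (ZMod 2) G.row := by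
  rw [← vecMul_injective_iff, ← coe_vecMulLinear, injective_iff_map_eq_zero]
  intro c hc
  by_contra hne
  have := single_le_sum (f := fun c => weightPenalty (Fintype.card ι) (hammingNorm (c ᵥ* G)))
    (fun c _ => weightPenalty_nonneg _ _) (mem_erase.mpr ⟨hne, mem_univ c⟩)
  rw [show c ᵥ* G = 0 from hc, hammingNorm_zero, weightPenalty, if_pos rfl] at this
  exact (this.trans_lt hG).false

theorem card_hammingNorm_vecMul_le (G : Matrix κ ι (ZMod 2)) {k : ℕ} (hk : k ≠ 0)
    (hkn : k ≤ Fintype.card ι) :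
    (#{c : κ → ZMod 2 | hammingNorm (c ᵥ* G) = k} : ℝ) ≤
      (Fintype.card ι).choose k * rowSpacePenalty G := by
  have hchoose : (0 : ℝ) < (Fintype.card ι).choose k := by exact_mod_cast Nat.choose_pos hkn
  rw [← div_le_iff₀' hchoose, div_eq_mul_inv, ← nsmul_eq_mul, ← sum_const]
  calc ∑ c with hammingNorm (c ᵥ* G) = k, ((Fintype.card ι).choose k : ℝ)⁻¹
      = ∑ c with hammingNorm (c ᵥ* G) = k,
          weightPenalty (Fintype.card ι) (hammingNorm (c ᵥ* G)) :=
        sum_congr rfl fun c hc => by rw [(mem_filter.mp hc).2, weightPenalty, if_neg hk]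
    _ ≤ rowSpacePenalty G := by
        refine sum_le_sum_of_subset_of_nonneg (fun c hc => mem_erase.mpr ⟨?_, mem_univ c⟩)
          fun c _ _ => weightPenalty_nonneg _ _
        rintro rfl
        simp [eq_comm, hk] at hc

end RowSpacePenalty

theorem stmt_1_general (m nr : ℕ) (hmn : m < nr) :
    ∃ G : Matrix (Fin m) (Fin nr) (ZMod 2),
      LinearIndependent (ZMod 2) (fun i => G i) ∧
      ∀ k ∈ Finset.Icc 1 nr,
        (({x : Fin nr → ZMod 2 | x ∈ Submodule.span (ZMod 2) (Set.range G) ∧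
            (Finset.univ.filter (fun j => x j ≠ 0)).card = k}.ncard : ℝ)
          ≤ 2 * nr * (2 : ℝ) ^ ((m : ℤ) - (nr : ℤ)) * (nr.choose k)) := by
  have : Nonempty (Fin nr) := ⟨⟨m, hmn⟩⟩
  obtain ⟨G, hG⟩ := exists_rowSpacePenalty_lt (κ := Fin m) (ι := Fin nr)
  simp only [Fintype.card_fin] at hG
  have hbound : 2 * nr * (2 : ℝ) ^ ((m : ℤ) - nr) ≤ nr := by
    have : (2 : ℝ) ^ ((m : ℤ) - nr) ≤ 2 ^ (-1 : ℤ) :=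
      zpow_le_zpow_right₀ one_le_two (by omega)
    norm_num at this
    nlinarith [(Nat.cast_nonneg nr : (0 : ℝ) ≤ nr)]
  have hind : LinearIndependent (ZMod 2) G.row :=
    linearIndependent_row_of_rowSpacePenalty_lt (by simpa using hG.trans_le hbound)
  refine ⟨G, hind, fun k hk => ?_⟩
  obtain ⟨hk1, hkn⟩ := mem_Icc.mp hk
  calc _ = (#{c : Fin m → ZMod 2 | hammingNorm (c ᵥ* G) = k} : ℝ) :=
        congrArg Nat.cast (ncard_setOf_mem_span_and hind (hammingNorm · = k))
    _ ≤ nr.choose k * rowSpacePenalty G := by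
        simpa using card_hammingNorm_vecMul_le G (by omega) (by simpa using hkn)
    _ ≤ _ := by rw [mul_comm]; gcongr

/-- For `m < n_r` there exists a full row-rank `m × n_r` matrix over GF(2)
whose row space has at most `2·n_r·2^{m-n_r}·C(n_r,k)` vectors of each Hamming weight
`k ∈ {1,…,n_r}`. -/
theorem stmt_1 (m nr : ℕ) (hm : 0 < m) (hnr : 0 < nr) (hmn : m < nr) :
    ∃ G : Matrix (Fin m) (Fin nr) (ZMod 2),
      LinearIndependent (ZMod 2) (fun i => G i) ∧
      ∀ k ∈ Finset.Icc 1 nr,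
        (({x : Fin nr → ZMod 2 | x ∈ Submodule.span (ZMod 2) (Set.range G) ∧
            (Finset.univ.filter (fun j => x j ≠ 0)).card = k}.ncard : ℝ)
          ≤ 2 * nr * (2 : ℝ) ^ ((m : ℤ) - (nr : ℤ)) * (nr.choose k)) :=
  stmt_1_general m nr hmn
end

section
/- Let G be an m × n_r matrix over GF(2) with linearly independent rows (full row-rank), where m ≤ n_r. Define the indicator I_G(r) for r ∈ GF(2)^{n_r} by I_G(r) = 1 if r lies in the row space of G and r ≠ 0, and I_G(r) = 0 otherwise. Then for every k ∈ GF(2)^m and every r ∈ GF(2)^{n_r}, the absolute value of 2^{−n_r} · Σ_{a ∈ GF(2)^{n_r}} ( [G a = k] − 2^{−m} ) · (−1)^{a·r} equals 2^{−m} · I_G(r), where [G a = k] is 1 if the matrix–vector product G a (over GF(2)) equals k and 0 otherwise, and (−1)^{a·r} = +1 if the GF(2) inner product a·r equals 0 and −1 if it equals 1. -/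
/-!
Write `χ_r(a) = (-1)^{a·r}`. The sum splits as `S₁ - 2^{-m} S₂` with `S₁ = Σ_{Ga=k} χ_r(a)` and
`S₂ = Σ_a χ_r(a)`. A character sum vanishes as soon as some translation of the domain flips its
sign: so `S₂ = 0` unless `r = 0`, and `S₁ = 0` unless `r` is orthogonal to `ker G`, i.e. unless
`r = cᵀG` lies in the row space. In that case `χ_r` is the constant `(-1)^{c·k}` on the fibre
`{Ga = k}`, which has `2^{n_r - m}` elements because full row rank makes `a ↦ Ga` surjective.
-/

open scoped Classical

open Matrix Finset

theorem Matrix.mulVec_surjective_of_linearIndependent_row {K m n : Type*} [Field K] [Fintype m]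
    [Fintype n] {G : Matrix m n K} (hG : LinearIndependent K G.row) :
    Function.Surjective G.mulVec := by
  have : LinearMap.range G.mulVecLin = ⊤ := by
    apply Submodule.eq_top_of_finrank_eq
    rw [Module.finrank_fintype_fun_eq_card, ← hG.rank_matrix]
    rfl
  exact LinearMap.range_eq_top.1 this

theorem Matrix.exists_mulVec_eq_zero_dotProduct_ne_zero {K n : Type*} [Field K] [Fintype n]
    {m : ℕ} {G : Matrix (Fin m) n K} (hG : LinearIndependent K G.row) {r : n → K}
    (hr : r ∉ Submodule.span K (Set.range G.row)) : ∃ b, G *ᵥ b = 0 ∧ b ⬝ᵥ r ≠ 0 := by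
  -- Appending `r` as a new first row keeps the rows independent; solve for the value `(1, 0)`.
  have hG' : LinearIndependent K (of (Fin.cons r G.row : Fin (m + 1) → n → K)).row :=
    linearIndependent_finCons.2 ⟨hG, hr⟩
  obtain ⟨b, hb⟩ := mulVec_surjective_of_linearIndependent_row hG' (Fin.cons 1 0)
  refine ⟨b, funext fun i => congrFun hb i.succ, ?_⟩
  have h0 := congrFun hb 0
  simp only [mulVec, of_apply, Fin.cons_zero] at h0
  simp [dotProduct_comm, h0]

theorem AddMonoidHom.card_fiber_mul_card_eq {A B : Type*} [AddGroup A] [Fintype A] [AddGroup B]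
    [Fintype B] [DecidableEq B] (f : A →+ B) (hf : Function.Surjective f) (b : B) :
    #{a | f a = b} * Fintype.card B = Fintype.card A := by
  rw [← card_univ (α := A), card_eq_sum_card_fiberwise (f := f) (s := univ) (t := univ)
    (by simp), sum_congr rfl fun c _ => card_fiber_eq_of_mem_range f (hf c) (hf b)]
  simp [mul_comm]

theorem Fintype.sum_eq_zero_of_add_right_eq_neg {A R : Type*} [AddGroup A] [Fintype A]
    [NonAssocRing R] [NoZeroDivisors R] [CharZero R] {f : A → R} (b : A)
    (hf : ∀ a, f (a + b) = -f a) : ∑ a, f a = 0 := by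
  have h := Equiv.sum_comp (Equiv.addRight b) f
  simp only [Equiv.coe_addRight, hf, sum_neg_distrib] at h
  exact CharZero.eq_neg_self_iff.1 h.symm

theorem ZMod.two_sign_add_of_ne_zero (x : ZMod 2) {y : ZMod 2} (hy : y ≠ 0) :
    (if x + y = 0 then (1 : ℝ) else -1) = -if x = 0 then 1 else -1 := by
  obtain rfl : y = 1 := by revert y; decide
  obtain rfl | rfl : x = 0 ∨ x = 1 := by revert x; decide
  · simp
  · simp [show (1 + 1 : ZMod 2) = 0 from rfl]

theorem sum_sign_dotProduct_eq_zero {n : Type*} [Fintype n] [DecidableEq n] {r : n → ZMod 2}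
    (hr : r ≠ 0) : ∑ a, (if a ⬝ᵥ r = 0 then (1 : ℝ) else -1) = 0 := by
  obtain ⟨j, hj⟩ := Function.ne_iff.1 hr
  refine Fintype.sum_eq_zero_of_add_right_eq_neg (Pi.single j 1) fun a => ?_
  rw [add_dotProduct, single_one_dotProduct, ZMod.two_sign_add_of_ne_zero _ hj]

theorem Matrix.sum_fiber_mul_sign_eq_zero {n : Type*} [Fintype n] [DecidableEq n] {m : ℕ}
    {G : Matrix (Fin m) n (ZMod 2)} (hG : LinearIndependent (ZMod 2) G.row) {r : n → ZMod 2}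
    (hr : r ∉ Submodule.span (ZMod 2) (Set.range G.row)) (k : Fin m → ZMod 2) :
    ∑ a, (if G *ᵥ a = k then (1 : ℝ) else 0) * (if a ⬝ᵥ r = 0 then 1 else -1) = 0 := by
  obtain ⟨b, hGb, hbr⟩ := exists_mulVec_eq_zero_dotProduct_ne_zero hG hr
  refine Fintype.sum_eq_zero_of_add_right_eq_neg b fun a => ?_
  rw [mulVec_add, hGb, add_zero, add_dotProduct, ZMod.two_sign_add_of_ne_zero _ hbr, mul_neg]

theorem Matrix.sum_fiber_mul_sign_vecMul {m n : Type*} [Fintype m] [Fintype n] [DecidableEq n]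
    (G : Matrix m n (ZMod 2)) (c k : m → ZMod 2) :
    ∑ a, (if G *ᵥ a = k then (1 : ℝ) else 0) * (if a ⬝ᵥ c ᵥ* G = 0 then 1 else -1) =
      (if c ⬝ᵥ k = 0 then 1 else -1) * #{a | G *ᵥ a = k} := by
  have h : ∀ a, (if G *ᵥ a = k then (1 : ℝ) else 0) * (if a ⬝ᵥ c ᵥ* G = 0 then 1 else -1) =
      (if c ⬝ᵥ k = 0 then 1 else -1) * if G *ᵥ a = k then 1 else 0 := by
    intro a
    split_ifs with hk <;> simp_all [dotProduct_comm a, ← dotProduct_mulVec]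
  rw [sum_congr rfl fun a _ => h a, ← mul_sum, sum_boole]

theorem stmt_2_general (m nr : ℕ) (G : Matrix (Fin m) (Fin nr) (ZMod 2))
    (hG : LinearIndependent (ZMod 2) (fun i => G i))
    (IG : (Fin nr → ZMod 2) → ℝ)
    (hIG : ∀ r, IG r =
      if r ∈ Submodule.span (ZMod 2) (Set.range G) ∧ r ≠ 0 then 1 else 0)
    (k : Fin m → ZMod 2) (r : Fin nr → ZMod 2) :
    |(2 : ℝ) ^ (-(nr : ℤ)) * ∑ a : Fin nr → ZMod 2,
        ((if G.mulVec a = k then (1 : ℝ) else 0) - (2 : ℝ) ^ (-(m : ℤ))) *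
        (if dotProduct a r = 0 then (1 : ℝ) else -1)|
      = (2 : ℝ) ^ (-(m : ℤ)) * IG r := by
  have hfiber : (#{a | G *ᵥ a = k} : ℝ) = 2 ^ (nr : ℤ) * 2 ^ (-(m : ℤ)) := by
    have h := G.mulVecLin.toAddMonoidHom.card_fiber_mul_card_eq
      (mulVec_surjective_of_linearIndependent_row hG) k
    simp only [Fintype.card_pi, ZMod.card, prod_const, card_univ, Fintype.card_fin] at h
    rw [_root_.zpow_neg, zpow_natCast, eq_mul_inv_iff_mul_eq₀ (by positivity)]
    exact_mod_cast h
  simp only [sub_mul, sum_sub_distrib, ← mul_sum, hIG]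
  rcases eq_or_ne r 0 with rfl | hr0
  · simp [sum_boole, hfiber, mul_comm]
  rw [sum_sign_dotProduct_eq_zero hr0, mul_zero, sub_zero]
  by_cases hrW : r ∈ Submodule.span (ZMod 2) (Set.range G)
  · obtain ⟨c, rfl⟩ : ∃ c, c ᵥ* G = r :=
      show r ∈ LinearMap.range G.vecMulLinear by rwa [range_vecMulLinear]
    have hsign : |(if c ⬝ᵥ k = 0 then (1 : ℝ) else -1)| = 1 := by split_ifs <;> simp
    rw [sum_fiber_mul_sign_vecMul, if_pos (And.intro hrW hr0), abs_mul, abs_mul, hsign, hfiber]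
    simp [← mul_assoc]
  · rw [sum_fiber_mul_sign_eq_zero hG hrW, if_neg fun h => hrW h.1]
    simp

/-- For a full row-rank `m × n_r` matrix `G` over GF(2), the absolute value of
`2^{-n_r} Σ_a ([G a = k] - 2^{-m})·(-1)^{a·r}` equals `2^{-m}·I_G(r)`, where `I_G(r)` is
the indicator that `r` is a nonzero member of the row space of `G`. -/
theorem stmt_2 (m nr : ℕ) (hmn : m ≤ nr) (G : Matrix (Fin m) (Fin nr) (ZMod 2))
    (hG : LinearIndependent (ZMod 2) (fun i => G i))
    (IG : (Fin nr → ZMod 2) → ℝ)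
    (hIG : ∀ r, IG r =
      if r ∈ Submodule.span (ZMod 2) (Set.range G) ∧ r ≠ 0 then 1 else 0)
    (k : Fin m → ZMod 2) (r : Fin nr → ZMod 2) :
    |(2 : ℝ) ^ (-(nr : ℤ)) * ∑ a : Fin nr → ZMod 2,
        ((if G.mulVec a = k then (1 : ℝ) else 0) - (2 : ℝ) ^ (-(m : ℤ))) *
        (if dotProduct a r = 0 then (1 : ℝ) else -1)|
      = (2 : ℝ) ^ (-(m : ℤ)) * IG r :=
  stmt_2_general m nr G hG IG hIG k r
end

section
/- Let n ≥ 1 be an integer, let t, s ∈ {0,1}^n, and for (a,b) ∈ {0,1}^2 let μ_{a,b} = (1/n)·|{i : (t_i, s_i) = (a,b)}| be the relative frequency of the pair (a,b). Let w_e be a real number with 3/4 < w_e ≤ (2+√2)/4 and set Δ = w_e − 1/2 − (1/4)(√2·μ_{0,0} − μ_{0,1} + μ_{1,0}). Then there exists a real number γ ≥ 0 such that, defining ξ_{0,0} = e^{−γ w_e}[(e^{γ} − 1)·(2+√2)/4 + 1], ξ_{1,0} = e^{−γ w_e}(3e^{γ} + 1)/4, ξ_{0,1} = e^{−γ w_e}(3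 + e^{γ})/4, and ξ_{1,1} = e^{−γ w_e}(1 + e^{γ})/2, one has Σ_{a,b ∈ {0,1}} μ_{a,b}·ξ_{a,b} − 1 ≤ −Δ² if Δ ≥ 0, and Σ_{a,b ∈ {0,1}} μ_{a,b}·ξ_{a,b} − 1 ≤ 0 if Δ < 0. -/
/-!
Put `c₀₀ = (2 + √2)/4`, `c₁₀ = 3/4`, `c₀₁ = 1/4`, `c₁₁ = 1/2`. Then
`ξ_{a,b} = e^{-γ w_e} (c_{a,b} e^γ + 1 - c_{a,b})`, and since the frequencies sum to one,
`Σ μ_{a,b} ξ_{a,b} = p e^{γ(1 - w_e)} + (1 - p) e^{-γ w_e}` with `p = Σ μ_{a,b} c_{a,b} = w_e - Δ`: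
the moment generating function of `X - w_e` for a Bernoulli(`p`) variable `X`.
Hoeffding's lemma bounds it by `e^{-γΔ + γ²/8}`, so `γ = 4Δ` gives `e^{-2Δ²} ≤ 1 - Δ²`,
where `p ≥ 1/4` and `w_e ≤ (2 + √2)/4` keep `Δ² ≤ 1/2`. For `Δ < 0` take `γ = 0`.
-/

open Real ProbabilityTheory MeasureTheory Finset

theorem bernoulli_mgf_le_exp {p : ℝ} (hp : p ∈ Set.Icc 0 1) (γ : ℝ) :
    p * exp (γ * (1 - p)) + (1 - p) * exp (-(γ * p)) ≤ exp (γ ^ 2 / 8) := by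
  let X : Bool → ℝ := fun b => if b then 1 else 0
  have hX : ∀ b, X b ∈ Set.Icc (0 : ℝ) 1 := by rintro (_ | _) <;> simp [X]
  have hoeffding := (hasSubgaussianMGF_of_mem_Icc (μ := Ber(true, false, ⟨p, hp⟩))
    Measurable.of_discrete.aemeasurable (ae_of_all _ hX)).mgf_le γ
  norm_num [mgf, X, integral_bernoulliMeasure] at hoeffding
  exact hoeffding.trans_eq (by ring_nf)

theorem bernoulli_shifted_mgf_le {p : ℝ} (hp : p ∈ Set.Icc 0 1) (w γ : ℝ) :
    p * exp (γ * (1 - w)) + (1 - p) * exp (-(γ * w)) ≤ exp (-(γ * (w - p)) + γ ^ 2 / 8) := by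
  have hwin : exp (γ * (1 - w)) = exp (-(γ * (w - p))) * exp (γ * (1 - p)) := by
    rw [← exp_add]; ring_nf
  have hloss : exp (-(γ * w)) = exp (-(γ * (w - p))) * exp (-(γ * p)) := by
    rw [← exp_add]; ring_nf
  rw [hwin, hloss, exp_add]
  calc _ = exp (-(γ * (w - p))) * (p * exp (γ * (1 - p)) + (1 - p) * exp (-(γ * p))) := by ring
    _ ≤ exp (-(γ * (w - p))) * exp (γ ^ 2 / 8) := by gcongr; exact bernoulli_mgf_le_exp hp γ

theorem exp_neg_two_mul_sq_le {x : ℝ} (hx : x ^ 2 ≤ 1 / 2) : exp (-(2 * x ^ 2)) ≤ 1 - x ^ 2 := by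
  have h := add_one_le_exp (2 * x ^ 2)
  rw [exp_neg, inv_le_iff_one_le_mul₀ (exp_pos _)]
  nlinarith

theorem sum_card_filter_eq_and_eq {ι : Type*} [Fintype ι] (t s : ι → Bool) :
    ∑ a, ∑ b, #{i | t i = a ∧ s i = b} = Fintype.card ι := by
  rw [← Fintype.sum_prod_type', ← card_univ,
    card_eq_sum_card_fiberwise (f := fun i => (t i, s i)) (t := univ) (by simp)]
  simp only [Prod.ext_iff]

theorem sum_pair_frequencies_eq_one {n : ℕ} (hn : n ≠ 0) (t s : Fin n → Bool)
    (μ : Bool → Bool → ℝ) (hμ : ∀ a b, μ a b = (#{i | t i = a ∧ s i = b} : ℝ) / n) :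
    μ false false + μ true false + μ false true + μ true true = 1 := by
  have h := sum_card_filter_eq_and_eq t s
  simp only [Fintype.sum_bool, Fintype.card_fin] at h
  rw [hμ, hμ, hμ, hμ, ← add_div, ← add_div, ← add_div, div_eq_one_iff_eq (by positivity)]
  exact_mod_cast (by omega : _ = n)

noncomputable def winProb (μ : Bool → Bool → ℝ) : ℝ :=
  (2 + √2) / 4 * μ false false + 3 / 4 * μ true false + 1 / 4 * μ false true + 1 / 2 * μ true true

theorem winProb_mem_Icc {μ : Bool → Bool → ℝ} (hμ : ∀ a b, 0 ≤ μ a b)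
    (hsum : μ false false + μ true false + μ false true + μ true true = 1) :
    winProb μ ∈ Set.Icc (1 / 4) 1 := by
  have hsqrt2_le : √2 ≤ 2 := by nlinarith [sqrt_nonneg 2, sq_sqrt (zero_le_two (α := ℝ))]
  have := mul_nonneg (sqrt_nonneg 2) (hμ false false)
  have := mul_nonneg (sub_nonneg.2 hsqrt2_le) (hμ false false)
  have := hμ true false; have := hμ false true; have := hμ true true
  rw [winProb]
  constructor <;> linarith

theorem weighted_exp_sum_eq {μ : Bool → Bool → ℝ}
    (hsum : μ false false + μ true false + μ false true + μ true true = 1) (w γ : ℝ) :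
    μ false false * (exp (-γ * w) * ((exp γ - 1) * ((2 + √2) / 4) + 1)) +
      μ true false * (exp (-γ * w) * (3 * exp γ + 1) / 4) +
      μ false true * (exp (-γ * w) * (3 + exp γ) / 4) +
      μ true true * (exp (-γ * w) * (1 + exp γ) / 2) =
    winProb μ * exp (γ * (1 - w)) + (1 - winProb μ) * exp (-(γ * w)) := by
  have hwin : exp (γ * (1 - w)) = exp (-γ * w) * exp γ := by rw [← exp_add]; ring_nf
  rw [winProb, hwin, neg_mul]
  linear_combination exp (-(γ * w)) * hsum

theorem stmt_6_general (n : ℕ) (hn : 1 ≤ n) (t s : Fin n → Bool) (μ : Bool → Bool → ℝ)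
    (hμ : ∀ a b, μ a b =
      ((Finset.univ.filter (fun i => t i = a ∧ s i = b)).card : ℝ) / n)
    (we : ℝ) (hw2 : we ≤ (2 + Real.sqrt 2) / 4)
    (Δ : ℝ)
    (hΔ : Δ = we - 1 / 2 -
      (1 / 4) * (Real.sqrt 2 * μ false false - μ false true + μ true false)) :
    ∃ γ : ℝ, 0 ≤ γ ∧
      (μ false false * (Real.exp (-γ * we) *
          ((Real.exp γ - 1) * ((2 + Real.sqrt 2) / 4) + 1)) +
       μ true false * (Real.exp (-γ * we) * (3 * Real.exp γ + 1) / 4) +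
       μ false true * (Real.exp (-γ * we) * (3 + Real.exp γ) / 4) +
       μ true true * (Real.exp (-γ * we) * (1 + Real.exp γ) / 2)) - 1
      ≤ if 0 ≤ Δ then -Δ ^ 2 else 0 := by
  have hsum := sum_pair_frequencies_eq_one (by omega) t s μ hμ
  have hμ0 (a b : Bool) : 0 ≤ μ a b := by rw [hμ]; positivity
  have hp := winProb_mem_Icc hμ0 hsum
  have hsqrt2 : √2 ^ 2 = 2 := sq_sqrt zero_le_two
  have hΔp : Δ = we - winProb μ := by rw [winProb]; linear_combination hΔ + (1 / 2) * hsum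
  rcases le_or_gt 0 Δ with hΔ0 | hΔ0
  · refine ⟨4 * Δ, by positivity, ?_⟩
    have hΔsq : Δ ^ 2 ≤ 1 / 2 := by
      have hΔle : Δ ≤ (1 + √2) / 4 := by linarith [hp.1]
      nlinarith [mul_le_mul hΔle hΔle hΔ0 (by positivity)]
    rw [if_pos hΔ0, weighted_exp_sum_eq hsum]
    calc _ ≤ exp (-(4 * Δ * (we - winProb μ)) + (4 * Δ) ^ 2 / 8) - 1 := by
          gcongr
          exact bernoulli_shifted_mgf_le (Set.Icc_subset_Icc_left (by norm_num) hp) we _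
      _ = exp (-(2 * Δ ^ 2)) - 1 := by rw [← hΔp]; ring_nf
      _ ≤ -Δ ^ 2 := by linarith [exp_neg_two_mul_sq_le hΔsq]
  · refine ⟨0, le_rfl, ?_⟩
    rw [if_neg hΔ0.not_ge, weighted_exp_sum_eq hsum]
    simp

/-- Given the relative frequencies μ of pairs of bits of `(t,s)` and
`w_e ∈ (3/4, (2+√2)/4]`, with `Δ = w_e - 1/2 - (1/4)(√2·μ₀₀ - μ₀₁ + μ₁₀)`, there exists
`γ ≥ 0` such that `Σ μ_{a,b}·ξ_{a,b} - 1 ≤ -Δ²` if `Δ ≥ 0` and `≤ 0` if `Δ < 0`. -/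
theorem stmt_6 (n : ℕ) (hn : 1 ≤ n) (t s : Fin n → Bool) (μ : Bool → Bool → ℝ)
    (hμ : ∀ a b, μ a b =
      ((Finset.univ.filter (fun i => t i = a ∧ s i = b)).card : ℝ) / n)
    (we : ℝ) (hw1 : 3 / 4 < we) (hw2 : we ≤ (2 + Real.sqrt 2) / 4)
    (Δ : ℝ)
    (hΔ : Δ = we - 1 / 2 -
      (1 / 4) * (Real.sqrt 2 * μ false false - μ false true + μ true false)) :
    ∃ γ : ℝ, 0 ≤ γ ∧
      (μ false false * (Real.exp (-γ * we) *
          ((Real.exp γ - 1) * ((2 + Real.sqrt 2) / 4) + 1)) +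
       μ true false * (Real.exp (-γ * we) * (3 * Real.exp γ + 1) / 4) +
       μ false true * (Real.exp (-γ * we) * (3 + Real.exp γ) / 4) +
       μ true true * (Real.exp (-γ * we) * (1 + Real.exp γ) / 2)) - 1
      ≤ if 0 ≤ Δ then -Δ ^ 2 else 0 :=
  stmt_6_general n hn t s μ hμ we hw2 Δ hΔ
end

section
/- Let w be a real number with 3/4 < w ≤ (2+√2)/4 and let γ ≥ 0. Define, for θ ∈ (3/4, (2+√2)/4], the functions λ_{0,0}(θ) = θ, λ_{0,1}(θ) = 1 − θ, λ_{1,0}(θ) = 1/2 + (√2/4)·√(8θ(1−θ) − 1), and λ_{1,1}(θ) = 1/2 − (√2/4)·√(8θ(1−θ) − 1). Then the following four suprema over θ ∈ (3/4, (2+√2)/4] hold: sup_θ [e^{γ(1−w)}λ_{0,0}(θ) + e^{−γw}λ_{0,1}(θ)] = e^{−γw}[(e^{γ} − 1)·(2+√2)/4 + 1]; sup_θ [e^{γ(1−w)}λ_{1,0}(θ) + e^{−γw}λ_{1,1}(θ)] = e^{−γw}(3e^{γ} + 1)/4; sup_θ [e^{γ(1−w)}λ_{0,1}(θ) + e^{−γw}λ_{0,0}(θ)]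 = e^{−γw}(3 + e^{γ})/4; and sup_θ [e^{γ(1−w)}λ_{1,1}(θ) + e^{−γw}λ_{1,0}(θ)] = e^{−γw}(1 + e^{γ})/2. -/
open Set Filter

lemma sup_attained {f : ℝ → ℝ} {c d : ℝ} (hcd : c < d)
    (h : ∀ θ ∈ Set.Ioc c d, f θ ≤ f d) : sSup (f '' Set.Ioc c d) = f d := by
  apply IsGreatest.csSup_eq
  refine ⟨⟨d, ⟨hcd, le_refl d⟩, rfl⟩, ?_⟩
  rintro y ⟨θ, hθ, rfl⟩
  exact h θ hθ

lemma sup_left {f : ℝ → ℝ} {c d L : ℝ} (hcd : c < d)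
    (hub : ∀ θ ∈ Set.Ioc c d, f θ ≤ L) (hcont : ContinuousAt f c) (hL : f c = L) :
    sSup (f '' Set.Ioc c d) = L := by
  have hbdd : BddAbove (f '' Set.Ioc c d) := by
    refine ⟨L, ?_⟩
    rintro y ⟨θ, hθ, rfl⟩
    exact hub θ hθ
  apply le_antisymm
  · refine csSup_le ⟨f d, d, ⟨hcd, le_refl d⟩, rfl⟩ ?_
    rintro y ⟨θ, hθ, rfl⟩
    exact hub θ hθ
  · have hne : (nhdsWithin c (Set.Ioc c d)).NeBot := by
      rw [← mem_closure_iff_nhdsWithin_neBot, closure_Ioc hcd.ne]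
      exact ⟨le_refl c, hcd.le⟩
    have htend : Filter.Tendsto f (nhdsWithin c (Set.Ioc c d)) (nhds L) :=
      hL ▸ hcont.continuousWithinAt
    exact le_of_tendsto htend (Filter.eventually_of_mem self_mem_nhdsWithin
      (fun θ hθ => le_csSup hbdd ⟨θ, hθ, rfl⟩))

/-- Closed forms of the four suprema over `θ ∈ (3/4, (2+√2)/4]` of
`e^{γ(1-w)}λ_{t,s}(θ) + e^{-γw}λ_{t,s+1}(θ)`, where `λ_{0,0}(θ) = θ`, `λ_{0,1}(θ) = 1-θ`,
`λ_{1,0}(θ) = 1/2 + (√2/4)√(8θ(1-θ)-1)`, `λ_{1,1}(θ) = 1/2 - (√2/4)√(8θ(1-θ)-1)`. -/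
theorem stmt_7 (w γ : ℝ) (hw1 : 3 / 4 < w) (hw2 : w ≤ (2 + Real.sqrt 2) / 4)
    (hγ : 0 ≤ γ) :
    sSup ((fun θ : ℝ => Real.exp (γ * (1 - w)) * θ + Real.exp (-γ * w) * (1 - θ)) ''
        Set.Ioc (3 / 4) ((2 + Real.sqrt 2) / 4))
      = Real.exp (-γ * w) * ((Real.exp γ - 1) * ((2 + Real.sqrt 2) / 4) + 1) ∧
    sSup ((fun θ : ℝ =>
        Real.exp (γ * (1 - w)) *
          (1 / 2 + (Real.sqrt 2 / 4) * Real.sqrt (8 * θ * (1 - θ) - 1)) +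
        Real.exp (-γ * w) *
          (1 / 2 - (Real.sqrt 2 / 4) * Real.sqrt (8 * θ * (1 - θ) - 1))) ''
        Set.Ioc (3 / 4) ((2 + Real.sqrt 2) / 4))
      = Real.exp (-γ * w) * (3 * Real.exp γ + 1) / 4 ∧
    sSup ((fun θ : ℝ => Real.exp (γ * (1 - w)) * (1 - θ) + Real.exp (-γ * w) * θ) ''
        Set.Ioc (3 / 4) ((2 + Real.sqrt 2) / 4))
      = Real.exp (-γ * w) * (3 + Real.exp γ) / 4 ∧
    sSup ((fun θ : ℝ =>
        Real.exp (γ * (1 - w)) *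
          (1 / 2 - (Real.sqrt 2 / 4) * Real.sqrt (8 * θ * (1 - θ) - 1)) +
        Real.exp (-γ * w) *
          (1 / 2 + (Real.sqrt 2 / 4) * Real.sqrt (8 * θ * (1 - θ) - 1))) ''
        Set.Ioc (3 / 4) ((2 + Real.sqrt 2) / 4))
      = Real.exp (-γ * w) * (1 + Real.exp γ) / 2 := by
  set s := Real.sqrt 2 with hs_def
  have hs2 : s ^ 2 = 2 := Real.sq_sqrt (by norm_num)
  have hs0 : 0 ≤ s := Real.sqrt_nonneg 2
  have hs1 : 1 < s := by nlinarith
  have hT : (3 : ℝ) / 4 < (2 + s) / 4 := by linarith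
  set a := Real.exp (γ * (1 - w)) with ha_def
  set b := Real.exp (-γ * w) with hb_def
  have hb0 : 0 < b := Real.exp_pos _
  have hab : b ≤ a := Real.exp_le_exp.2 (by nlinarith)
  have hae : a = Real.exp γ * b := by
    rw [ha_def, hb_def, ← Real.exp_add]; ring_nf
  have hhalf : s * Real.sqrt (1 / 2) = 1 := by
    rw [hs_def, ← Real.sqrt_mul (by norm_num : (0:ℝ) ≤ 2)]
    norm_num
  refine ⟨?_, ?_, ?_, ?_⟩
  · rw [sup_attained hT]
    · rw [hae]; ring
    · intro θ hθ
      have := hθ.2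
      nlinarith [sub_nonneg.2 hab]
  · rw [sup_left hT (L := b * (3 * Real.exp γ + 1) / 4)]
    · intro θ hθ
      have h1 : Real.sqrt (8 * θ * (1 - θ) - 1) ≤ Real.sqrt (1 / 2) :=
        Real.sqrt_le_sqrt (by nlinarith [hθ.1])
      have h2 : s * Real.sqrt (8 * θ * (1 - θ) - 1) ≤ 1 := by
        calc s * Real.sqrt (8 * θ * (1 - θ) - 1) ≤ s * Real.sqrt (1 / 2) :=
              mul_le_mul_of_nonneg_left h1 hs0
          _ = 1 := hhalf
      have h3 : 0 ≤ Real.sqrt (8 * θ * (1 - θ) - 1) := Real.sqrt_nonneg _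
      have h4 : (0:ℝ) ≤ (a - b) * (1 - s * Real.sqrt (8 * θ * (1 - θ) - 1)) :=
        mul_nonneg (sub_nonneg.2 hab) (by linarith)
      rw [hae]
      rw [hae] at h4
      nlinarith [h4]
    · fun_prop
    · have hv : (8 : ℝ) * (3/4) * (1 - 3/4) - 1 = 1/2 := by norm_num
      rw [hv, hae]
      nlinarith [hhalf]
  · rw [sup_left hT (L := b * (3 + Real.exp γ) / 4)]
    · intro θ hθ
      have h4 : (0:ℝ) ≤ (a - b) * (θ - 3/4) :=
        mul_nonneg (sub_nonneg.2 hab) (by linarith [hθ.1])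
      rw [hae]; rw [hae] at h4
      nlinarith [h4]
    · fun_prop
    · rw [hae]; ring
  · rw [sup_attained hT]
    · have hz : 8 * ((2 + s)/4) * (1 - (2 + s)/4) - 1 = 0 := by nlinarith
      rw [hz, Real.sqrt_zero, hae]
      ring
    · intro θ hθ
      have hz : 8 * ((2 + s)/4) * (1 - (2 + s)/4) - 1 = 0 := by nlinarith
      have h3 : 0 ≤ Real.sqrt (8 * θ * (1 - θ) - 1) := Real.sqrt_nonneg _
      have h4 : (0:ℝ) ≤ (a - b) * (s / 4 * Real.sqrt (8 * θ * (1 - θ) - 1)) :=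
        mul_nonneg (sub_nonneg.2 hab) (by positivity)
      rw [hz, Real.sqrt_zero]
      nlinarith [h4]
end

section
/- For a real parameter γ let σ_γ denote the 2×2 complex matrix with zero diagonal, top-right entry e^{iγ} and bottom-left entry e^{−iγ}. For α, β ∈ ℝ define the 4×4 complex matrix S(α,β) = σ_0 ⊗ (σ_0 + σ_β) + σ_α ⊗ (σ_0 − σ_β) (Kronecker product), and set μ = 1 + e^{iβ} + (1 − e^{iβ})e^{iα} and ν = 1 + e^{−iβ} + (1 − e^{−iβ})e^{iα}. Then: (i) |μ|² = 4(1 + sin α sin β) and |ν|² = 4(1 − sin α sin β); and (ii) if μ ≠ 0 and ν ≠ 0, then, writing e₁, e₂, e₃, e₄ for the standard basis of ℂ⁴, the four vectors φ_{0,0} = (1/√2)((μ/|μ|)e₁ + e₄), φ_{0,1} = (1/√2)(−(μ/|μ|)e₁ + e₄), φ_{1,0} = (1/√2)((ν/|ν|)e₂ + e₃), φ_{1,1} = (1/√2)(−(ν/|ν|)e₂ + e₃) form an orthonormal basis of ℂ⁴ and satisfy S(α,β)φ_{0,0} = |μ|·φ_{0,0}, S(α,β)φ_{0,1} = −|μ|·φ_{0,1},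 S(α,β)φ_{1,0} = |ν|·φ_{1,0}, and S(α,β)φ_{1,1} = −|ν|·φ_{1,1}. -/
/-!
In the basis `e₀₀, e₀₁, e₁₀, e₁₁` the operator `S(α,β)` only swaps `e₀₀ ↔ e₁₁` and `e₀₁ ↔ e₁₀`:
`S e₁₁ = μ e₀₀`, `S e₀₀ = μ̄ e₁₁`, `S e₁₀ = ν e₀₁`, `S e₀₁ = ν̄ e₁₀`. So `S` is a direct sum of two
`2 × 2` blocks `[[0, z], [z̄, 0]]`, and such a block has the eigenvectors `(z/|z|) e ± e'` with
eigenvalues `±|z|`. The norms follow from a direct computation, using `ν(α, β) = μ(α, -β)`.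
-/

open Matrix Kronecker ComplexConjugate

section
variable {ι R : Type*} [Fintype ι] [CommRing R]

theorem mulVec_smul_smul_add_eq_smul {A : Matrix ι ι R} {x y : ι → R} {z z' c l : R}
    (hx : A *ᵥ x = z' • y) (hy : A *ᵥ y = z • x) (hl : c * z' = l) (hc : l * c = z) (k : R) :
    A *ᵥ (k • (c • x + y)) = l • (k • (c • x + y)) := by
  subst hl hc
  rw [mulVec_smul, mulVec_add, mulVec_smul, hx, hy]
  module

end

section
variable {ι : Type*} [Fintype ι] [DecidableEq ι]

theorem sum_conj_mul_smul_single_add_single {a b : ι} (hab : a ≠ b) (k k' c c' : ℂ) :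
    ∑ i, conj ((k • (c • Pi.single a 1 + Pi.single b 1 : ι → ℂ)) i) *
      (k' • (c' • Pi.single a 1 + Pi.single b 1 : ι → ℂ)) i = conj k * k' * (conj c * c' + 1) := by
  simp only [Pi.smul_apply, Pi.add_apply, Pi.single_apply, smul_eq_mul, mul_ite, mul_one, mul_zero,
    mul_add, map_add, add_mul, Finset.sum_add_distrib, Finset.sum_ite_eq', Finset.mem_univ,
    if_true, map_mul, hab, hab.symm, if_false, map_zero, zero_mul, add_zero, zero_add]
  ring

theorem sum_conj_mul_smul_single_add_single_of_disjoint {a b a' b' : ι} (haa : a ≠ a')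
    (hab : a ≠ b') (hba : b ≠ a') (hbb : b ≠ b') (k k' c c' : ℂ) :
    ∑ i, conj ((k • (c • Pi.single a 1 + Pi.single b 1 : ι → ℂ)) i) *
      (k' • (c' • Pi.single a' 1 + Pi.single b' 1 : ι → ℂ)) i = 0 := by
  simp [Pi.single_apply, mul_add, add_mul, Finset.sum_add_distrib, haa.symm, hab.symm, hba.symm,
    hbb.symm]

end

namespace Complex

theorem div_norm_mul_conj {z : ℂ} (hz : z ≠ 0) : z / ‖z‖ * conj z = ‖z‖ := by
  have : (‖z‖ : ℂ) ≠ 0 := by simpa using hz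
  rw [div_mul_eq_mul_div, mul_conj']
  field_simp

theorem norm_mul_div_norm {z : ℂ} (hz : z ≠ 0) : (‖z‖ : ℂ) * (z / ‖z‖) = z := by
  have : (‖z‖ : ℂ) ≠ 0 := by simpa using hz
  field_simp

theorem conj_div_norm_mul_div_norm {z : ℂ} (hz : z ≠ 0) : conj (z / ‖z‖) * (z / ‖z‖) = 1 := by
  rw [conj_mul', norm_div, norm_real, norm_norm, div_self (norm_ne_zero_iff.mpr hz), ofReal_one,
    one_pow]

end Complex

section
variable {ι : Type*} [Fintype ι] {A : Matrix ι ι ℂ} {x y : ι → ℂ} {z : ℂ}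

theorem mulVec_smul_div_norm_smul_add_eq (hx : A *ᵥ x = conj z • y) (hy : A *ᵥ y = z • x)
    (hz : z ≠ 0) (k : ℂ) :
    A *ᵥ (k • ((z / ‖z‖) • x + y)) = (‖z‖ : ℂ) • (k • ((z / ‖z‖) • x + y)) :=
  mulVec_smul_smul_add_eq_smul hx hy (Complex.div_norm_mul_conj hz) (Complex.norm_mul_div_norm hz) k

theorem mulVec_smul_neg_div_norm_smul_add_eq (hx : A *ᵥ x = conj z • y) (hy : A *ᵥ y = z • x)
    (hz : z ≠ 0) (k : ℂ) :
    A *ᵥ (k • (-((z / ‖z‖) • x) + y)) = (-(‖z‖ : ℂ)) • (k • (-((z / ‖z‖) • x) + y)) := by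
  rw [← neg_smul]
  exact mulVec_smul_smul_add_eq_smul hx hy (by rw [neg_mul, Complex.div_norm_mul_conj hz])
    (by rw [neg_mul_neg, Complex.norm_mul_div_norm hz]) k

end

noncomputable section

def pauliPhase (γ : ℝ) : Matrix (Fin 2) (Fin 2) ℂ :=
  !![0, Complex.exp (Complex.I * γ); Complex.exp (-(Complex.I * γ)), 0]

def chsh (α β : ℝ) : Matrix (Fin 2 × Fin 2) (Fin 2 × Fin 2) ℂ :=
  pauliPhase 0 ⊗ₖ (pauliPhase 0 + pauliPhase β) + pauliPhase α ⊗ₖ (pauliPhase 0 - pauliPhase β)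

def chshMu (α β : ℝ) : ℂ :=
  1 + Complex.exp (Complex.I * β) + (1 - Complex.exp (Complex.I * β)) * Complex.exp (Complex.I * α)

def chshNu (α β : ℝ) : ℂ :=
  1 + Complex.exp (-(Complex.I * β)) +
    (1 - Complex.exp (-(Complex.I * β))) * Complex.exp (Complex.I * α)

end

theorem chshNu_eq_chshMu_neg (α β : ℝ) : chshNu α β = chshMu α (-β) := by
  simp [chshNu, chshMu]

theorem norm_chshMu_sq (α β : ℝ) : ‖chshMu α β‖ ^ 2 = 4 * (1 + Real.sin α * Real.sin β) := by
  rw [chshMu, mul_comm Complex.I, mul_comm Complex.I, Complex.exp_mul_I, Complex.exp_mul_I]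
  simp only [Complex.sq_norm, Complex.normSq_apply, Complex.add_re, Complex.add_im,
    Complex.sub_re, Complex.sub_im, Complex.mul_re, Complex.mul_im, Complex.one_re, Complex.one_im,
    Complex.I_re, Complex.I_im, Complex.cos_ofReal_re, Complex.cos_ofReal_im, Complex.sin_ofReal_re,
    Complex.sin_ofReal_im, mul_zero, mul_one, sub_self, add_zero, zero_add, zero_sub, neg_mul,
    sub_neg_eq_add]
  linear_combination
    (1 - 2 * Real.cos β + Real.sin β ^ 2 + Real.cos β ^ 2) * Real.sin_sq_add_cos_sq α +
      (2 - 2 * Real.cos α) * Real.sin_sq_add_cos_sq β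

theorem norm_chshNu_sq (α β : ℝ) : ‖chshNu α β‖ ^ 2 = 4 * (1 - Real.sin α * Real.sin β) := by
  rw [chshNu_eq_chshMu_neg, norm_chshMu_sq, Real.sin_neg]
  ring

theorem chsh_mulVec_single_one_one (α β : ℝ) :
    chsh α β *ᵥ Pi.single (1, 1) 1 = chshMu α β • Pi.single (0, 0) 1 := by
  ext ⟨i, j⟩
  fin_cases i <;> fin_cases j <;> simp [chsh, chshMu, pauliPhase, mul_comm]

theorem chsh_mulVec_single_zero_zero (α β : ℝ) :
    chsh α β *ᵥ Pi.single (0, 0) 1 = conj (chshMu α β) • Pi.single (1, 1) 1 := by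
  ext ⟨i, j⟩
  fin_cases i <;> fin_cases j <;> simp [chsh, chshMu, pauliPhase, ← Complex.exp_conj, mul_comm]

theorem chsh_mulVec_single_one_zero (α β : ℝ) :
    chsh α β *ᵥ Pi.single (1, 0) 1 = chshNu α β • Pi.single (0, 1) 1 := by
  ext ⟨i, j⟩
  fin_cases i <;> fin_cases j <;> simp [chsh, chshNu, pauliPhase, mul_comm]

theorem chsh_mulVec_single_zero_one (α β : ℝ) :
    chsh α β *ᵥ Pi.single (0, 1) 1 = conj (chshNu α β) • Pi.single (1, 0) 1 := by
  ext ⟨i, j⟩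
  fin_cases i <;> fin_cases j <;> simp [chsh, chshNu, pauliPhase, ← Complex.exp_conj, mul_comm]

/-- Spectral analysis of the CHSH operator
`S(α,β) = σ₀ ⊗ (σ₀ + σ_β) + σ_α ⊗ (σ₀ - σ_β)`:
(i) `|μ|² = 4(1 + sin α sin β)` and `|ν|² = 4(1 - sin α sin β)`;
(ii) if `μ ≠ 0` and `ν ≠ 0`, the vectors `φ_{t,s}` form an orthonormal basis of ℂ⁴ and
are eigenvectors of `S(α,β)` with eigenvalues `±|μ|, ±|ν|`. -/
theorem stmt_10 (α β : ℝ)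
    (σ : ℝ → Matrix (Fin 2) (Fin 2) ℂ)
    (hσ : ∀ γ : ℝ, σ γ =
      !![0, Complex.exp (Complex.I * γ); Complex.exp (-(Complex.I * γ)), 0])
    (S : Matrix (Fin 2 × Fin 2) (Fin 2 × Fin 2) ℂ)
    (hS : S = σ 0 ⊗ₖ (σ 0 + σ β) + σ α ⊗ₖ (σ 0 - σ β))
    (μ ν : ℂ)
    (hμ : μ = 1 + Complex.exp (Complex.I * β) +
      (1 - Complex.exp (Complex.I * β)) * Complex.exp (Complex.I * α))
    (hν : ν = 1 + Complex.exp (-(Complex.I * β)) +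
      (1 - Complex.exp (-(Complex.I * β))) * Complex.exp (Complex.I * α))
    (φ : Bool → Bool → (Fin 2 × Fin 2) → ℂ)
    (hφ00 : φ false false = (1 / (Real.sqrt 2 : ℂ)) •
      ((μ / (‖μ‖ : ℂ)) • (Pi.single ((0 : Fin 2), (0 : Fin 2)) 1 : (Fin 2 × Fin 2) → ℂ) +
        (Pi.single ((1 : Fin 2), (1 : Fin 2)) 1 : (Fin 2 × Fin 2) → ℂ)))
    (hφ01 : φ false true = (1 / (Real.sqrt 2 : ℂ)) •
      (-((μ / (‖μ‖ : ℂ)) • (Pi.single ((0 : Fin 2), (0 : Fin 2)) 1 : (Fin 2 × Fin 2) → ℂ)) +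
        (Pi.single ((1 : Fin 2), (1 : Fin 2)) 1 : (Fin 2 × Fin 2) → ℂ)))
    (hφ10 : φ true false = (1 / (Real.sqrt 2 : ℂ)) •
      ((ν / (‖ν‖ : ℂ)) • (Pi.single ((0 : Fin 2), (1 : Fin 2)) 1 : (Fin 2 × Fin 2) → ℂ) +
        (Pi.single ((1 : Fin 2), (0 : Fin 2)) 1 : (Fin 2 × Fin 2) → ℂ)))
    (hφ11 : φ true true = (1 / (Real.sqrt 2 : ℂ)) •
      (-((ν / (‖ν‖ : ℂ)) • (Pi.single ((0 : Fin 2), (1 : Fin 2)) 1 : (Fin 2 × Fin 2) → ℂ)) +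
        (Pi.single ((1 : Fin 2), (0 : Fin 2)) 1 : (Fin 2 × Fin 2) → ℂ))) :
    (‖μ‖ ^ 2 = 4 * (1 + Real.sin α * Real.sin β) ∧
     ‖ν‖ ^ 2 = 4 * (1 - Real.sin α * Real.sin β)) ∧
    (μ ≠ 0 → ν ≠ 0 →
      (∀ t s t' s' : Bool,
        ∑ i : Fin 2 × Fin 2, (starRingEnd ℂ) (φ t s i) * φ t' s' i =
          if t = t' ∧ s = s' then 1 else 0) ∧
      S.mulVec (φ false false) = (‖μ‖ : ℂ) • φ false false ∧
      S.mulVec (φ false true) = (-(‖μ‖ : ℂ)) • φ false true ∧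
      S.mulVec (φ true false) = (‖ν‖ : ℂ) • φ true false ∧
      S.mulVec (φ true true) = (-(‖ν‖ : ℂ)) • φ true true) := by
  obtain rfl : σ = pauliPhase := funext hσ
  obtain rfl : S = chsh α β := hS
  obtain rfl : μ = chshMu α β := hμ
  obtain rfl : ν = chshNu α β := hν
  refine ⟨⟨norm_chshMu_sq α β, norm_chshNu_sq α β⟩, fun hμ hν => ⟨?_, ?_, ?_, ?_, ?_⟩⟩
  · have hk : ((√2 : ℝ) : ℂ)⁻¹ * ((√2 : ℝ) : ℂ)⁻¹ = 2⁻¹ := by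
      rw [← mul_inv, ← Complex.ofReal_mul, Real.mul_self_sqrt zero_le_two, Complex.ofReal_ofNat]
    have hu := Complex.conj_div_norm_mul_div_norm hμ
    have hv := Complex.conj_div_norm_mul_div_norm hν
    generalize chshMu α β / ‖chshMu α β‖ = u at hu hφ00 hφ01
    generalize chshNu α β / ‖chshNu α β‖ = v at hv hφ10 hφ11
    simp only [← neg_smul] at hφ01 hφ11
    intro t s t' s'
    cases t <;> cases s <;> cases t' <;> cases s' <;>
      simp (disch := decide) only [hφ00, hφ01, hφ10, hφ11, sum_conj_mul_smul_single_add_single,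
        sum_conj_mul_smul_single_add_single_of_disjoint] <;>
      norm_num [hk, hu, hv]
  · rw [hφ00]
    exact mulVec_smul_div_norm_smul_add_eq (chsh_mulVec_single_zero_zero α β)
      (chsh_mulVec_single_one_one α β) hμ _
  · rw [hφ01]
    exact mulVec_smul_neg_div_norm_smul_add_eq (chsh_mulVec_single_zero_zero α β)
      (chsh_mulVec_single_one_one α β) hμ _
  · rw [hφ10]
    exact mulVec_smul_div_norm_smul_add_eq (chsh_mulVec_single_zero_one α β)
      (chsh_mulVec_single_one_zero α β) hν _
  · rw [hφ11]
    exact mulVec_smul_neg_div_norm_smul_add_eq (chsh_mulVec_single_zero_one α β)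
      (chsh_mulVec_single_one_zero α β) hν _
end

section
/- For α, β ∈ ℝ with μ = 1 + e^{iβ} + (1 − e^{iβ})e^{iα} ≠ 0 and ν = 1 + e^{−iβ} + (1 − e^{−iβ})e^{iα} ≠ 0, define φ_{0,0} = (1/√2)((μ/|μ|)e₁ + e₄), φ_{0,1} = (1/√2)(−(μ/|μ|)e₁ + e₄), φ_{1,0} = (1/√2)((ν/|ν|)e₂ + e₃), φ_{1,1} = (1/√2)(−(ν/|ν|)e₂ + e₃) in ℂ⁴, where e₁,…,e₄ is the standard basis. Let C = σ_0 ⊗ I₂, where σ_0 is the 2×2 matrix with zero diagonal and both off-diagonal entries equal to 1, and I₂ is the 2×2 identity. Then for all t, t', s, s' ∈ {0,1}: ⟨φ_{t,s}, C φ_{t,s'}⟩ = 0, and consequently |⟨φ_{t,s}, C φ_{t',s'}⟩| ≤ 1 with |⟨φ_{t,s}, C φ_{t',s'}⟩| = 0 whenever t' = t; i.e., |⟨φ_{t,s}, C φ_{t',s'}⟩| ≤ δ_{t+1 mod 2}^{t'}. -/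
/-!
`C = σ₀ ⊗ I₂` flips the first tensor index, so it exchanges the spans of `{e₀₀, e₁₁}` and
`{e₀₁, e₁₀}`, which contain `φ_{0,s}` and `φ_{1,s}` respectively. Hence `⟨φ_{t,s}, C φ_{t',s'}⟩`
vanishes for `t = t'`, and otherwise equals `(conj a + b) / 2` for the phases `a, b` of the two
vectors; as these have modulus at most `1`, so does the inner product.
-/

open Matrix Kronecker

local notation "σ₀" => (!![0, 1; 1, 0] : Matrix (Fin 2) (Fin 2) ℂ)

theorem sigmaZero_kronecker_one_mulVec_single (i j : Fin 2) (c : ℂ) :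
    (σ₀ ⊗ₖ (1 : Matrix (Fin 2) (Fin 2) ℂ)) *ᵥ Pi.single (i, j) c = Pi.single (i + 1, j) c := by
  ext ⟨k, l⟩
  rw [mulVec_single]
  fin_cases i <;> fin_cases j <;> fin_cases k <;> fin_cases l <;> simp [one_apply]

/-- `φ_{t,s}` is `bellVec (±μ/|μ|) 0` for `t = 0` and `bellVec (±ν/|ν|) 1` for `t = 1`. -/
noncomputable def bellVec (u : ℂ) (t : Fin 2) : Fin 2 × Fin 2 → ℂ :=
  (1 / (Real.sqrt 2 : ℂ)) • (u • Pi.single (0, t) 1 + Pi.single (1, t + 1) 1)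

theorem sigmaZero_kronecker_one_mulVec_bellVec (u : ℂ) (t : Fin 2) :
    (σ₀ ⊗ₖ (1 : Matrix (Fin 2) (Fin 2) ℂ)) *ᵥ bellVec u t =
      (1 / (Real.sqrt 2 : ℂ)) • (u • Pi.single (1, t) 1 + Pi.single (0, t + 1) 1) := by
  simp only [bellVec, mulVec_smul, mulVec_add, sigmaZero_kronecker_one_mulVec_single]
  rfl

theorem star_bellVec_dotProduct_sigmaZero_kronecker_one_mulVec_bellVec (a b : ℂ) (t t' : Fin 2) :
    star (bellVec a t) ⬝ᵥ (σ₀ ⊗ₖ (1 : Matrix (Fin 2) (Fin 2) ℂ)) *ᵥ bellVec b t' =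
      if t = t' + 1 then (starRingEnd ℂ a + b) / 2 else 0 := by
  have hsqrt : (Real.sqrt 2 : ℂ)⁻¹ * (Real.sqrt 2 : ℂ)⁻¹ = 1 / 2 := by
    rw [← mul_inv, ← sq, ← Complex.ofReal_pow, Real.sq_sqrt zero_le_two]
    norm_num
  rw [sigmaZero_kronecker_one_mulVec_bellVec]
  simp only [bellVec, star_smul, star_add, Pi.star_single, star_one, smul_dotProduct,
    dotProduct_smul, add_dotProduct, dotProduct_add, single_dotProduct, Pi.single_apply,
    Prod.mk.injEq]
  fin_cases t <;> fin_cases t' <;> simp <;> linear_combination (starRingEnd ℂ a + b) * hsqrt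

theorem norm_conj_add_div_two_le_one {a b : ℂ} (ha : ‖a‖ ≤ 1) (hb : ‖b‖ ≤ 1) :
    ‖(starRingEnd ℂ a + b) / 2‖ ≤ 1 := by
  rw [norm_div, Complex.norm_two, div_le_one two_pos]
  calc ‖starRingEnd ℂ a + b‖ ≤ ‖starRingEnd ℂ a‖ + ‖b‖ := norm_add_le _ _
    _ ≤ 2 := by rw [Complex.norm_conj]; linarith

theorem Complex.norm_div_ofReal_norm_le_one (z : ℂ) : ‖z / (‖z‖ : ℂ)‖ ≤ 1 := by
  rw [norm_div, Complex.norm_real, norm_norm]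
  exact div_self_le_one _

theorem stmt_11_general (μ ν : ℂ)
    (φ : Bool → Bool → (Fin 2 × Fin 2) → ℂ)
    (hφ00 : φ false false = (1 / (Real.sqrt 2 : ℂ)) •
      ((μ / (‖μ‖ : ℂ)) •
          (Pi.single ((0 : Fin 2), (0 : Fin 2)) 1 : (Fin 2 × Fin 2) → ℂ) +
        (Pi.single ((1 : Fin 2), (1 : Fin 2)) 1 : (Fin 2 × Fin 2) → ℂ)))
    (hφ01 : φ false true = (1 / (Real.sqrt 2 : ℂ)) •
      (-((μ / (‖μ‖ : ℂ)) •
          (Pi.single ((0 : Fin 2), (0 : Fin 2)) 1 : (Fin 2 × Fin 2) → ℂ)) +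
        (Pi.single ((1 : Fin 2), (1 : Fin 2)) 1 : (Fin 2 × Fin 2) → ℂ)))
    (hφ10 : φ true false = (1 / (Real.sqrt 2 : ℂ)) •
      ((ν / (‖ν‖ : ℂ)) •
          (Pi.single ((0 : Fin 2), (1 : Fin 2)) 1 : (Fin 2 × Fin 2) → ℂ) +
        (Pi.single ((1 : Fin 2), (0 : Fin 2)) 1 : (Fin 2 × Fin 2) → ℂ)))
    (hφ11 : φ true true = (1 / (Real.sqrt 2 : ℂ)) •
      (-((ν / (‖ν‖ : ℂ)) •
          (Pi.single ((0 : Fin 2), (1 : Fin 2)) 1 : (Fin 2 × Fin 2) → ℂ)) +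
        (Pi.single ((1 : Fin 2), (0 : Fin 2)) 1 : (Fin 2 × Fin 2) → ℂ)))
    (C : Matrix (Fin 2 × Fin 2) (Fin 2 × Fin 2) ℂ)
    (hC : C = (!![0, 1; 1, 0] : Matrix (Fin 2) (Fin 2) ℂ) ⊗ₖ
      (1 : Matrix (Fin 2) (Fin 2) ℂ)) :
    (∀ t s s' : Bool,
      ∑ i : Fin 2 × Fin 2, (starRingEnd ℂ) (φ t s i) * C.mulVec (φ t s') i = 0) ∧
    (∀ t t' s s' : Bool,
      ‖∑ i : Fin 2 × Fin 2,
          (starRingEnd ℂ) (φ t s i) * C.mulVec (φ t' s') i‖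
        ≤ if t' = !t then 1 else 0) := by
  have hφ : ∀ t s, ∃ u : ℂ, ‖u‖ ≤ 1 ∧ φ t s = bellVec u (bif t then 1 else 0) := by
    have hμ := Complex.norm_div_ofReal_norm_le_one μ
    have hν := Complex.norm_div_ofReal_norm_le_one ν
    rintro (_ | _) (_ | _)
    · exact ⟨_, hμ, hφ00⟩
    · exact ⟨_, (norm_neg _).trans_le hμ, by rw [hφ01, ← neg_smul]; rfl⟩
    · exact ⟨_, hν, hφ10⟩
    · exact ⟨_, (norm_neg _).trans_le hν, by rw [hφ11, ← neg_smul]; rfl⟩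
  have hinner : ∀ t t' s s', ∃ a b : ℂ, ‖a‖ ≤ 1 ∧ ‖b‖ ≤ 1 ∧
      ∑ i, (starRingEnd ℂ) (φ t s i) * C.mulVec (φ t' s') i =
        if t' = !t then (starRingEnd ℂ a + b) / 2 else 0 := by
    intro t t' s s'
    obtain ⟨a, ha, hs⟩ := hφ t s
    obtain ⟨b, hb, hs'⟩ := hφ t' s'
    have hcond : ((bif t then 1 else 0 : Fin 2) = (bif t' then 1 else 0) + 1) ↔ t' = !t := by
      cases t <;> cases t' <;> decide
    rw [hC, hs, hs']
    exact ⟨a, b, ha, hb, (star_bellVec_dotProduct_sigmaZero_kronecker_one_mulVec_bellVec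
      a b _ _).trans (if_congr hcond rfl rfl)⟩
  refine ⟨fun t s s' => ?_, fun t t' s s' => ?_⟩
  · obtain ⟨a, b, -, -, h⟩ := hinner t t s s'
    simpa using h
  · obtain ⟨a, b, ha, hb, h⟩ := hinner t t' s s'
    rw [h]
    split_ifs
    · exact norm_conj_add_div_two_le_one ha hb
    · rw [norm_zero]

/-- For the CHSH eigenvectors `φ_{t,s}` and `C = σ₀ ⊗ I₂`,
`⟨φ_{t,s}, C φ_{t,s'}⟩ = 0` and `|⟨φ_{t,s}, C φ_{t',s'}⟩| ≤ δ_{t+1 mod 2}^{t'}`. -/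
theorem stmt_11 (α β : ℝ) (μ ν : ℂ)
    (hμ : μ = 1 + Complex.exp (Complex.I * β) +
      (1 - Complex.exp (Complex.I * β)) * Complex.exp (Complex.I * α))
    (hν : ν = 1 + Complex.exp (-(Complex.I * β)) +
      (1 - Complex.exp (-(Complex.I * β))) * Complex.exp (Complex.I * α))
    (hμ0 : μ ≠ 0) (hν0 : ν ≠ 0)
    (φ : Bool → Bool → (Fin 2 × Fin 2) → ℂ)
    (hφ00 : φ false false = (1 / (Real.sqrt 2 : ℂ)) •
      ((μ / (‖μ‖ : ℂ)) •
          (Pi.single ((0 : Fin 2), (0 : Fin 2)) 1 : (Fin 2 × Fin 2) → ℂ) +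
        (Pi.single ((1 : Fin 2), (1 : Fin 2)) 1 : (Fin 2 × Fin 2) → ℂ)))
    (hφ01 : φ false true = (1 / (Real.sqrt 2 : ℂ)) •
      (-((μ / (‖μ‖ : ℂ)) •
          (Pi.single ((0 : Fin 2), (0 : Fin 2)) 1 : (Fin 2 × Fin 2) → ℂ)) +
        (Pi.single ((1 : Fin 2), (1 : Fin 2)) 1 : (Fin 2 × Fin 2) → ℂ)))
    (hφ10 : φ true false = (1 / (Real.sqrt 2 : ℂ)) •
      ((ν / (‖ν‖ : ℂ)) •
          (Pi.single ((0 : Fin 2), (1 : Fin 2)) 1 : (Fin 2 × Fin 2) → ℂ) +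
        (Pi.single ((1 : Fin 2), (0 : Fin 2)) 1 : (Fin 2 × Fin 2) → ℂ)))
    (hφ11 : φ true true = (1 / (Real.sqrt 2 : ℂ)) •
      (-((ν / (‖ν‖ : ℂ)) •
          (Pi.single ((0 : Fin 2), (1 : Fin 2)) 1 : (Fin 2 × Fin 2) → ℂ)) +
        (Pi.single ((1 : Fin 2), (0 : Fin 2)) 1 : (Fin 2 × Fin 2) → ℂ)))
    (C : Matrix (Fin 2 × Fin 2) (Fin 2 × Fin 2) ℂ)
    (hC : C = (!![0, 1; 1, 0] : Matrix (Fin 2) (Fin 2) ℂ) ⊗ₖ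
      (1 : Matrix (Fin 2) (Fin 2) ℂ)) :
    (∀ t s s' : Bool,
      ∑ i : Fin 2 × Fin 2, (starRingEnd ℂ) (φ t s i) * C.mulVec (φ t s') i = 0) ∧
    (∀ t t' s s' : Bool,
      ‖∑ i : Fin 2 × Fin 2,
          (starRingEnd ℂ) (φ t s i) * C.mulVec (φ t' s') i‖
        ≤ if t' = !t then 1 else 0) :=
  stmt_11_general μ ν φ hφ00 hφ01 hφ10 hφ11 C hC
end

section
/- Define the modified binary entropy h̃ : ℝ → ℝ by h̃(q) = −q·log₂ q − (1−q)·log₂(1−q) for q ∈ [0, 1/2] (with h̃(0) = 0 by convention) and h̃(q) = 1 for q ∉ [0, 1/2], and define the asymptotic key rate R(w) = 1 − h̃[ (2√2 + 4 − 8w) / (√2 − 1) ] for w ∈ (3/4, (2+√2)/4]. Then R(w) > 0 if and only if w > (9 + 3√2)/16; moreover R((2+√2)/4) = 1. -/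
/-! Up to the factor `1 / log 2`, `h̃` is Mathlib's `binEntropy` on `[0, 1/2]`, which stays below
`log 2` except at `1/2`; so `h̃ q < 1 ↔ q < 1/2` for `q ≥ 0`. The error rate
`q(w) = (2√2 + 4 - 8w)/(√2 - 1)` is affine and decreasing in `w`, nonnegative up to the quantum
maximum `w = (2+√2)/4` where it vanishes, and equals `1/2` at `w = (9+3√2)/16`. -/

open Real

lemma neg_mul_logb_sub_eq_binEntropy_div_log (q : ℝ) :
    -q * logb 2 q - (1 - q) * logb 2 (1 - q) = binEntropy q / log 2 := by
  rw [binEntropy, log_inv, log_inv, logb, logb]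
  ring

lemma neg_mul_logb_sub_lt_one_iff (q : ℝ) :
    -q * logb 2 q - (1 - q) * logb 2 (1 - q) < 1 ↔ q ≠ 1 / 2 := by
  rw [neg_mul_logb_sub_eq_binEntropy_div_log, div_lt_one (log_pos one_lt_two),
    binEntropy_lt_log_two, one_div]

lemma lt_one_iff_lt_half_of_eq_binEntropy {htilde : ℝ → ℝ}
    (hh1 : ∀ q ∈ Set.Icc (0 : ℝ) (1 / 2),
      htilde q = -q * logb 2 q - (1 - q) * logb 2 (1 - q))
    (hh2 : ∀ q, q ∉ Set.Icc (0 : ℝ) (1 / 2) → htilde q = 1)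
    {q : ℝ} (hq0 : 0 ≤ q) : htilde q < 1 ↔ q < 1 / 2 := by
  rcases le_or_gt q (1 / 2) with hq | hq
  · rw [hh1 q ⟨hq0, hq⟩, neg_mul_logb_sub_lt_one_iff, hq.lt_iff_ne]
  · rw [hh2 q fun h => hq.not_ge h.2, lt_self_iff_false, false_iff, not_lt]
    exact hq.le

lemma chsh_error_lt_half_iff (w : ℝ) :
    (2 * √2 + 4 - 8 * w) / (√2 - 1) < 1 / 2 ↔ (9 + 3 * √2) / 16 < w := by
  rw [div_lt_iff₀ (sub_pos.2 one_lt_sqrt_two)]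
  constructor <;> intro h <;> linarith

/-- The asymptotic key rate `R(w) = 1 - h̃[(2√2 + 4 - 8w)/(√2 - 1)]`
satisfies `R(w) > 0 ↔ w > (9 + 3√2)/16` for `w ∈ (3/4, (2+√2)/4]`, and
`R((2+√2)/4) = 1`. -/
theorem stmt_16 (htilde : ℝ → ℝ)
    (hh1 : ∀ q ∈ Set.Icc (0 : ℝ) (1 / 2),
      htilde q = -q * Real.logb 2 q - (1 - q) * Real.logb 2 (1 - q))
    (hh2 : ∀ q, q ∉ Set.Icc (0 : ℝ) (1 / 2) → htilde q = 1)
    (R : ℝ → ℝ)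
    (hR : ∀ w ∈ Set.Ioc (3 / 4 : ℝ) ((2 + Real.sqrt 2) / 4),
      R w = 1 - htilde ((2 * Real.sqrt 2 + 4 - 8 * w) / (Real.sqrt 2 - 1))) :
    (∀ w ∈ Set.Ioc (3 / 4 : ℝ) ((2 + Real.sqrt 2) / 4),
      (0 < R w ↔ (9 + 3 * Real.sqrt 2) / 16 < w)) ∧
    R ((2 + Real.sqrt 2) / 4) = 1 := by
  have hs : 1 < √2 := one_lt_sqrt_two
  refine ⟨fun w hw => ?_, ?_⟩
  · have hq0 : 0 ≤ (2 * √2 + 4 - 8 * w) / (√2 - 1) :=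
      div_nonneg (by linarith [hw.2]) (by linarith)
    rw [hR w hw, sub_pos, lt_one_iff_lt_half_of_eq_binEntropy hh1 hh2 hq0,
      chsh_error_lt_half_iff]
  · have hq : 2 * √2 + 4 - 8 * ((2 + √2) / 4) = 0 := by ring
    rw [hR _ ⟨by linarith, le_rfl⟩, hq, zero_div, hh1 0 ⟨le_rfl, by norm_num⟩]
    simp
end
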